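/- arXiv:2507.10797 — 5 statements merged into one kernel-verified Lean document; each statement's English description precedes it below -/
import Mathlib

section
/- Let k ≥ 1 and let r, r' : Fin k → ℝ with ε := max_{1 ≤ i ≤ k} |r_i − r'_i|. Let p = softmax(r) and p' = softmax(r'). Then for every i, |p_i − p'_i| ≤ 2ε. -/
noncomputable def softmax {k : ℕ} (r : Fin k → ℝ) : Fin k → ℝ :=
  fun i => Real.exp (r i) / ∑ j, Real.exp (r j)

lemma softmax_sub_le {k : ℕ} (r r' : Fin k → ℝ) (ε : ℝ)
    (h : ∀ j, |r j - r' j| ≤ ε) (i : Fin k) :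
    softmax r i - softmax r' i ≤ 2 * ε := by
  have hS : 0 < ∑ j, Real.exp (r j) :=
    Finset.sum_pos (fun j _ => Real.exp_pos _) ⟨i, Finset.mem_univ i⟩
  have hS' : 0 < ∑ j, Real.exp (r' j) :=
    Finset.sum_pos (fun j _ => Real.exp_pos _) ⟨i, Finset.mem_univ i⟩
  have h1 : softmax r i ≤ 1 := by
    unfold softmax
    rw [div_le_one hS]
    exact Finset.single_le_sum (fun j _ => (Real.exp_pos (r j)).le) (Finset.mem_univ i)
  have h0 : 0 ≤ softmax r i := div_nonneg (Real.exp_pos _).le hS.le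
  have key : Real.exp (-(2 * ε)) * softmax r i ≤ softmax r' i := by
    unfold softmax
    rw [← mul_div_assoc, div_le_div_iff₀ hS hS']
    have h1' : Real.exp (r i) ≤ Real.exp ε * Real.exp (r' i) := by
      rw [← Real.exp_add]
      apply Real.exp_le_exp.2
      have := (abs_le.1 (h i)).2; linarith
    have h2' : ∑ j, Real.exp (r' j) ≤ Real.exp ε * ∑ j, Real.exp (r j) := by
      rw [Finset.mul_sum]
      apply Finset.sum_le_sum
      intro j _
      rw [← Real.exp_add]
      apply Real.exp_le_exp.2
      have := (abs_le.1 (h j)).1; linarith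
    have he : Real.exp (-(2 * ε)) * Real.exp ε * Real.exp ε = 1 := by
      rw [← Real.exp_add, ← Real.exp_add, show -(2 * ε) + ε + ε = 0 by ring, Real.exp_zero]
    calc Real.exp (-(2 * ε)) * Real.exp (r i) * ∑ j, Real.exp (r' j)
        = Real.exp (-(2 * ε)) * (Real.exp (r i) * ∑ j, Real.exp (r' j)) := by ring
      _ ≤ Real.exp (-(2 * ε)) *
          ((Real.exp ε * Real.exp (r' i)) * (Real.exp ε * ∑ j, Real.exp (r j))) := by
          apply mul_le_mul_of_nonneg_left _ (Real.exp_pos _).le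
          exact mul_le_mul h1' h2' hS'.le (by positivity)
      _ = (Real.exp (-(2 * ε)) * Real.exp ε * Real.exp ε) *
          (Real.exp (r' i) * ∑ j, Real.exp (r j)) := by ring
      _ = Real.exp (r' i) * ∑ j, Real.exp (r j) := by rw [he, one_mul]
  have hε0 : 0 ≤ ε := le_trans (abs_nonneg _) (h i)
  have hexp := Real.add_one_le_exp (-(2 * ε))
  have hle1 : Real.exp (-(2 * ε)) ≤ 1 := by
    rw [← Real.exp_zero]; exact Real.exp_le_exp.2 (by linarith)
  calc softmax r i - softmax r' i
      ≤ softmax r i - Real.exp (-(2 * ε)) * softmax r i := by linarith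
    _ = (1 - Real.exp (-(2 * ε))) * softmax r i := by ring
    _ ≤ (1 - Real.exp (-(2 * ε))) * 1 := by
        apply mul_le_mul_of_nonneg_left h1; linarith
    _ ≤ 2 * ε := by linarith

theorem stmt_1 {k : ℕ} (hk : 1 ≤ k) (r r' : Fin k → ℝ) (ε : ℝ)
    (hε : ε = ⨆ i, |r i - r' i|) :
    ∀ i, |softmax r i - softmax r' i| ≤ 2 * ε := by
  have : Nonempty (Fin k) := ⟨⟨0, hk⟩⟩
  have hb : ∀ j, |r j - r' j| ≤ ε := by
    intro j
    rw [hε]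
    exact le_ciSup (f := fun i => |r i - r' i|) (Set.Finite.bddAbove (Set.finite_range _)) j
  have hb' : ∀ j, |r' j - r j| ≤ ε := by
    intro j; rw [abs_sub_comm]; exact hb j
  intro i
  rw [abs_sub_le_iff]
  exact ⟨softmax_sub_le r r' ε hb i, softmax_sub_le r' r ε hb' i⟩
end

section
/- Let k ≥ 1 and let r, r' : Fin k → ℝ with ε := max_{1 ≤ i ≤ k} |r_i − r'_i|. Let p = softmax(r) and p' = softmax(r'). Then d_TV(p, p') ≤ 2ε. -/
noncomputable def dTV {k : ℕ} (p q : Fin k → ℝ) : ℝ :=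
  (1 / 2) * ∑ i, |p i - q i|

lemma softmax_le_aux {k : ℕ} (hk : 1 ≤ k) (r r' : Fin k → ℝ) (ε : ℝ)
    (hb : ∀ i, |r i - r' i| ≤ ε) (i : Fin k) :
    softmax r i ≤ Real.exp (2 * ε) * softmax r' i := by
  have hZpos : 0 < ∑ j, Real.exp (r j) :=
    Finset.sum_pos (fun j _ => Real.exp_pos _) ⟨⟨0, hk⟩, Finset.mem_univ _⟩
  have hZ'pos : 0 < ∑ j, Real.exp (r' j) :=
    Finset.sum_pos (fun j _ => Real.exp_pos _) ⟨⟨0, hk⟩, Finset.mem_univ _⟩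
  have h1 : Real.exp (r i) ≤ Real.exp ε * Real.exp (r' i) := by
    rw [← Real.exp_add]
    exact Real.exp_le_exp.2 (by linarith [(abs_le.1 (hb i)).2])
  have h2 : (∑ j, Real.exp (r' j)) ≤ Real.exp ε * ∑ j, Real.exp (r j) := by
    rw [Finset.mul_sum]
    refine Finset.sum_le_sum fun j _ => ?_
    rw [← Real.exp_add]
    exact Real.exp_le_exp.2 (by linarith [(abs_le.1 (hb j)).1])
  have h3 : Real.exp (2 * ε) = Real.exp ε * Real.exp ε := by
    rw [← Real.exp_add]; ring_nf
  have hmul : Real.exp (r i) * (∑ j, Real.exp (r' j)) ≤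
      (Real.exp ε * Real.exp (r' i)) * (Real.exp ε * ∑ j, Real.exp (r j)) :=
    mul_le_mul h1 h2 hZ'pos.le (by positivity)
  show Real.exp (r i) / (∑ j, Real.exp (r j)) ≤
      Real.exp (2 * ε) * (Real.exp (r' i) / ∑ j, Real.exp (r' j))
  rw [← mul_div_assoc, div_le_div_iff₀ hZpos hZ'pos, h3]
  nlinarith [hmul]

theorem stmt_2 {k : ℕ} (hk : 1 ≤ k) (r r' : Fin k → ℝ) (ε : ℝ)
    (hε : ε = ⨆ i, |r i - r' i|) :
    dTV (softmax r) (softmax r') ≤ 2 * ε := by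
  have hne : Nonempty (Fin k) := ⟨⟨0, hk⟩⟩
  have hb : ∀ i, |r i - r' i| ≤ ε := by
    intro i
    rw [hε]
    exact le_ciSup (f := fun i => |r i - r' i|) (Set.Finite.bddAbove (Set.finite_range _)) i
  have hε0 : 0 ≤ ε := le_trans (abs_nonneg _) (hb (Classical.arbitrary _))
  have hZpos : 0 < ∑ j, Real.exp (r j) :=
    Finset.sum_pos (fun j _ => Real.exp_pos _) ⟨⟨0, hk⟩, Finset.mem_univ _⟩
  have hZ'pos : 0 < ∑ j, Real.exp (r' j) :=
    Finset.sum_pos (fun j _ => Real.exp_pos _) ⟨⟨0, hk⟩, Finset.mem_univ _⟩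
  have hpos : ∀ i, 0 < softmax r i := fun i => div_pos (Real.exp_pos _) hZpos
  have hpos' : ∀ i, 0 < softmax r' i := fun i => div_pos (Real.exp_pos _) hZ'pos
  have hsum : ∑ i, softmax r i = 1 := by
    unfold softmax
    rw [← Finset.sum_div, div_self hZpos.ne']
  have hsum' : ∑ i, softmax r' i = 1 := by
    unfold softmax
    rw [← Finset.sum_div, div_self hZ'pos.ne']
  unfold dTV
  rcases le_total (1/2 : ℝ) ε with hcase | hcase
  · -- dTV ≤ 1 ≤ 2ε
    have : ∑ i, |softmax r i - softmax r' i| ≤ ∑ i, (softmax r i + softmax r' i) := by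
      refine Finset.sum_le_sum fun i _ => ?_
      calc |softmax r i - softmax r' i| ≤ |softmax r i| + |softmax r' i| := abs_sub _ _
        _ = softmax r i + softmax r' i := by
            rw [abs_of_pos (hpos i), abs_of_pos (hpos' i)]
    rw [Finset.sum_add_distrib, hsum, hsum'] at this
    linarith
  · -- small ε case
    set E := Real.exp (2 * ε) with hE
    have hE1 : 1 ≤ E := Real.one_le_exp (by linarith)
    have key1 := softmax_le_aux hk r r' ε hb
    have key2 := softmax_le_aux hk r' r ε (fun i => by rw [abs_sub_comm]; exact hb i)
    have hpt : ∀ i, |softmax r i - softmax r' i| ≤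
        (E - 1) * min (softmax r i) (softmax r' i) := by
      intro i
      rcases le_total (softmax r i) (softmax r' i) with h | h
      · rw [min_eq_left h, abs_of_nonpos (by linarith)]
        nlinarith [key2 i, (hpos i).le]
      · rw [min_eq_right h, abs_of_nonneg (by linarith)]
        nlinarith [key1 i, (hpos' i).le]
    have hsumle : ∑ i, |softmax r i - softmax r' i| ≤ E - 1 := by
      calc ∑ i, |softmax r i - softmax r' i|
          ≤ ∑ i, (E - 1) * min (softmax r i) (softmax r' i) :=
            Finset.sum_le_sum fun i _ => hpt i
        _ ≤ ∑ i, (E - 1) * softmax r' i :=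
            Finset.sum_le_sum fun i _ =>
              mul_le_mul_of_nonneg_left (min_le_right _ _) (by linarith)
        _ = E - 1 := by rw [← Finset.mul_sum, hsum', mul_one]
    have hEbound : E ≤ 1 + 4 * ε := by
      have hc := convexOn_exp.2 (Set.mem_univ (0:ℝ)) (Set.mem_univ (1:ℝ))
        (by linarith : (0:ℝ) ≤ 1 - 2*ε) (by linarith : (0:ℝ) ≤ 2*ε) (by ring)
      simp only [smul_eq_mul, mul_zero, mul_one, zero_add, Real.exp_zero] at hc
      have he : Real.exp 1 ≤ 3 := by
        have := Real.exp_one_lt_d9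
        linarith
      rw [hE]
      nlinarith
    linarith
end

section
/- Let k ≥ 1 and let p, p', q be probability vectors on Fin k with p_i > 0 and p'_i > 0 for all i. Then D_KL(q ∥ p) + D_KL(q ∥ p') ≥ d_TV(p, p')², i.e., inf_q (D_KL(q ∥ p) + D_KL(q ∥ p')) ≥ d_TV(p, p')². -/
def IsProbVec {k : ℕ} (p : Fin k → ℝ) : Prop :=
  (∀ i, 0 ≤ p i) ∧ ∑ i, p i = 1

noncomputable def KL {k : ℕ} (q p : Fin k → ℝ) : ℝ :=
  ∑ i, q i * Real.log (q i / p i)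

/-!
By the triangle inequality and `(a + b)² ≤ 2a² + 2b²` it suffices to prove Pinsker's inequality
`2 d_TV(q, p)² ≤ D_KL(q ∥ p)`. This follows from the pointwise bound
`a log(a/b) ≥ (a - b) + (3/2)(a - b)²/(a + 2b)`: summing it kills the linear terms, and the
Cauchy–Schwarz (Sedrakyan) inequality with weights `q_i + 2 p_i`, which sum to 3, bounds
`(∑ |q_i - p_i|)²` by `3 ∑ (q_i - p_i)²/(q_i + 2 p_i)`. The pointwise bound reduces to
`log x ≥ (x - 1)(5x + 1)/(2x(x + 2))`, whose difference has derivative `(x - 1)³/(x(x + 2))²`.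
-/

open Real Set

theorem le_of_hasDerivAt_of_sub_mul_nonneg {f f' : ℝ → ℝ} {c x : ℝ}
    (hf : ∀ y ∈ uIcc c x, HasDerivAt f (f' y) y)
    (hsign : ∀ y ∈ uIcc c x, 0 ≤ (y - c) * f' y) : f c ≤ f x := by
  have hcont : ∀ D ⊆ uIcc c x, ContinuousOn f D := fun D hD y hy =>
    (hf y (hD hy)).continuousAt.continuousWithinAt
  rcases le_total c x with h | h
  · rw [uIcc_of_le h] at hf hsign hcont
    refine monotoneOn_of_hasDerivWithinAt_nonneg (convex_Icc c x) (hcont _ subset_rfl)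
      (fun y hy => (hf y (interior_subset hy)).hasDerivWithinAt) (fun y hy => ?_)
      (left_mem_Icc.2 h) (right_mem_Icc.2 h) h
    rw [interior_Icc] at hy
    exact nonneg_of_mul_nonneg_right (hsign y (Ioo_subset_Icc_self hy)) (sub_pos.2 hy.1)
  · rw [uIcc_of_ge h] at hf hsign hcont
    refine antitoneOn_of_hasDerivWithinAt_nonpos (convex_Icc x c) (hcont _ subset_rfl)
      (fun y hy => (hf y (interior_subset hy)).hasDerivWithinAt) (fun y hy => ?_)
      (left_mem_Icc.2 h) (right_mem_Icc.2 h) h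
    rw [interior_Icc] at hy
    exact nonpos_of_mul_nonneg_right (hsign y (Ioo_subset_Icc_self hy)) (sub_neg.2 hy.2)

theorem hasDerivAt_log_sub_mul_div {x : ℝ} (hx : 0 < x) :
    HasDerivAt (fun y => log y - (y - 1) * (5 * y + 1) / (2 * y * (y + 2)))
      ((x - 1) ^ 3 / (x * (x + 2)) ^ 2) x := by
  have hnum :=
    ((hasDerivAt_id' x).sub_const 1).fun_mul (((hasDerivAt_id' x).const_mul 5).add_const 1)
  have hden := ((hasDerivAt_id' x).const_mul 2).fun_mul ((hasDerivAt_id' x).add_const 2)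
  refine ((hasDerivAt_log hx.ne').fun_sub (hnum.fun_div hden (by positivity))).congr_deriv ?_
  field_simp
  ring

theorem sub_one_mul_div_le_log {x : ℝ} (hx : 0 < x) :
    (x - 1) * (5 * x + 1) / (2 * x * (x + 2)) ≤ log x := by
  have hpos : ∀ y ∈ uIcc 1 x, 0 < y := fun y hy =>
    lt_of_lt_of_le (lt_min one_pos hx) hy.1
  have hmin := le_of_hasDerivAt_of_sub_mul_nonneg
    (fun y hy => hasDerivAt_log_sub_mul_div (hpos y hy)) fun y _ => by
      rw [← mul_div_assoc, ← pow_succ']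
      exact div_nonneg (Even.pow_nonneg (by decide) _) (sq_nonneg _)
  simpa [sub_nonneg] using hmin

theorem sub_add_sq_div_le_mul_log_div {a b : ℝ} (ha : 0 ≤ a) (hb : 0 < b) :
    a - b + 3 / 2 * ((a - b) ^ 2 / (a + 2 * b)) ≤ a * log (a / b) := by
  rcases ha.eq_or_lt with rfl | ha
  · field_simp
    nlinarith
  · calc a - b + 3 / 2 * ((a - b) ^ 2 / (a + 2 * b))
        = a * ((a / b - 1) * (5 * (a / b) + 1) / (2 * (a / b) * (a / b + 2))) := by
          field_simp
          ring
      _ ≤ a * log (a / b) := by gcongr; exact sub_one_mul_div_le_log (div_pos ha hb)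

theorem dTV_nonneg {k : ℕ} (p q : Fin k → ℝ) : 0 ≤ dTV p q :=
  mul_nonneg (by norm_num) (Finset.sum_nonneg fun _ _ => abs_nonneg _)

theorem dTV_comm {k : ℕ} (p q : Fin k → ℝ) : dTV p q = dTV q p := by
  simp only [dTV, abs_sub_comm]

theorem dTV_triangle {k : ℕ} (p q r : Fin k → ℝ) : dTV p r ≤ dTV p q + dTV q r := by
  simp only [dTV, ← mul_add, ← Finset.sum_add_distrib]
  gcongr
  exact abs_sub_le _ _ _

theorem two_mul_dTV_sq_le_KL {k : ℕ} {p q : Fin k → ℝ} (hp : IsProbVec p) (hq : IsProbVec q)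
    (hppos : ∀ i, 0 < p i) : 2 * dTV q p ^ 2 ≤ KL q p := by
  have hw : ∀ i ∈ Finset.univ, 0 < q i + 2 * p i := fun i _ => by
    linarith [hq.1 i, hppos i]
  have hw_sum : ∑ i, (q i + 2 * p i) = 3 := by
    rw [Finset.sum_add_distrib, ← Finset.mul_sum, hq.2, hp.2]
    norm_num
  have hKL : 3 / 2 * ∑ i, (q i - p i) ^ 2 / (q i + 2 * p i) ≤ KL q p :=
    calc 3 / 2 * ∑ i, (q i - p i) ^ 2 / (q i + 2 * p i)
        = ∑ i, (q i - p i + 3 / 2 * ((q i - p i) ^ 2 / (q i + 2 * p i))) := by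
          rw [Finset.sum_add_distrib, Finset.sum_sub_distrib, hq.2, hp.2, Finset.mul_sum]
          ring
      _ ≤ KL q p := Finset.sum_le_sum fun i _ =>
          sub_add_sq_div_le_mul_log_div (hq.1 i) (hppos i)
  have hsedrakyan := Finset.sq_sum_div_le_sum_sq_div Finset.univ (fun i => |q i - p i|) hw
  simp only [sq_abs, hw_sum] at hsedrakyan
  unfold dTV
  linarith

theorem stmt_4_general {k : ℕ} (p p' q : Fin k → ℝ)
    (hp : IsProbVec p) (hp' : IsProbVec p') (hq : IsProbVec q)
    (hppos : ∀ i, 0 < p i) (hp'pos : ∀ i, 0 < p' i) :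
    dTV p p' ^ 2 ≤ KL q p + KL q p' := by
  have htri : dTV p p' ≤ dTV q p + dTV q p' := dTV_comm p q ▸ dTV_triangle p q p'
  calc dTV p p' ^ 2 ≤ (dTV q p + dTV q p') ^ 2 := by gcongr; exact dTV_nonneg p p'
    _ ≤ 2 * dTV q p ^ 2 + 2 * dTV q p' ^ 2 := by nlinarith [sq_nonneg (dTV q p - dTV q p')]
    _ ≤ KL q p + KL q p' :=
      add_le_add (two_mul_dTV_sq_le_KL hp hq hppos) (two_mul_dTV_sq_le_KL hp' hq hp'pos)

theorem stmt_4 {k : ℕ} (hk : 1 ≤ k) (p p' q : Fin k → ℝ)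
    (hp : IsProbVec p) (hp' : IsProbVec p') (hq : IsProbVec q)
    (hppos : ∀ i, 0 < p i) (hp'pos : ∀ i, 0 < p' i) :
    dTV p p' ^ 2 ≤ KL q p + KL q p' :=
  stmt_4_general p p' q hp hp' hq hppos hp'pos
end

section
/- Let k ≥ 2 be even and let ε > 0 satisfy exp(2ε) ≤ 2. Let p be the uniform probability vector on Fin k (p_i = 1/k for all i), and let p' be the probability vector with p'_i = 2·exp(2ε)/(k·(exp(2ε)+1)) for the first k/2 indices and p'_i = 2/(k·(exp(2ε)+1)) for the last k/2 indices. Then d_TV(p, p') = (exp(2ε) − 1)/(2·(exp(2ε) + 1)), and in particular d_TV(p, p') ≥ ε/3. -/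
theorem stmt_14 {k : ℕ} (hk : 2 ≤ k) (hke : Even k) (ε : ℝ) (hε : 0 < ε)
    (h2 : Real.exp (2 * ε) ≤ 2)
    (p p' : Fin k → ℝ)
    (hp : ∀ i, p i = 1 / (k : ℝ))
    (hp' : ∀ i : Fin k, p' i =
      if (i : ℕ) < k / 2 then 2 * Real.exp (2 * ε) / (k * (Real.exp (2 * ε) + 1))
      else 2 / (k * (Real.exp (2 * ε) + 1))) :
    dTV p p' = (Real.exp (2 * ε) - 1) / (2 * (Real.exp (2 * ε) + 1)) ∧
      ε / 3 ≤ dTV p p' := by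
  set E := Real.exp (2 * ε) with hEdef
  have hE1 : 1 < E := by
    rw [hEdef]
    have := Real.add_one_le_exp (2 * ε)
    nlinarith
  have hkpos : (0 : ℝ) < (k : ℝ) := by
    have : 0 < k := by omega
    exact_mod_cast this
  have hne : (k : ℝ) * (E + 1) ≠ 0 := by positivity
  have key : ∀ i : Fin k, |p i - p' i| = (E - 1) / ((k : ℝ) * (E + 1)) := by
    intro i
    rw [hp, hp']
    split_ifs
    · rw [abs_sub_comm]
      have : 2 * E / ((k : ℝ) * (E + 1)) - 1 / (k : ℝ) = (E - 1) / ((k : ℝ) * (E + 1)) := by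
        field_simp; ring
      rw [this, abs_of_nonneg (div_nonneg (by linarith) (by positivity))]
    · have : 1 / (k : ℝ) - 2 / ((k : ℝ) * (E + 1)) = (E - 1) / ((k : ℝ) * (E + 1)) := by
        field_simp; ring
      rw [this, abs_of_nonneg (div_nonneg (by linarith) (by positivity))]
  have hsum : ∑ i, |p i - p' i| = (k : ℝ) * ((E - 1) / ((k : ℝ) * (E + 1))) := by
    rw [Finset.sum_congr rfl fun i _ => key i]
    simp [Finset.card_univ, mul_comm]
  have hdtv : dTV p p' = (E - 1) / (2 * (E + 1)) := by
    rw [dTV, hsum]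
    field_simp
  refine ⟨hdtv, ?_⟩
  rw [hdtv, div_le_div_iff₀ (by norm_num) (by positivity)]
  have h3 : 2 * ε + 1 ≤ E := by rw [hEdef]; exact Real.add_one_le_exp (2 * ε)
  nlinarith
end

section
/- Let k ≥ 1, let r : Fin k → ℝ, and let r_* = max_{1 ≤ i ≤ k} r_i. Then for every probability vector q on Fin k, the limit as β → ∞ of (1/β) · D_KL(q ∥ softmax(β·r)) exists and equals ∑_{i=1}^k q_i (r_* − r_i). -/
theorem stmt_16 {k : ℕ} (hk : 1 ≤ k) (r : Fin k → ℝ)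
    (q : Fin k → ℝ) (hq : IsProbVec q) :
    Filter.Tendsto (fun β : ℝ => (1 / β) * KL q (softmax (fun i => β * r i)))
      Filter.atTop (nhds (∑ i, q i * ((⨆ j, r j) - r i))) := by
  classical
  have : NeZero k := ⟨by omega⟩
  obtain ⟨hq0, hq1⟩ := hq
  set M := ⨆ j, r j with hMdef
  obtain ⟨i₀, hi₀⟩ : ∃ i, r i = M := exists_eq_ciSup_of_finite
  have hle : ∀ i, r i ≤ M := fun i => le_ciSup (Set.Finite.bddAbove (Set.finite_range r)) i
  set C := ∑ i, q i * Real.log (q i) with hC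
  set A := ∑ i, q i * r i with hA
  set T : ℝ → ℝ := fun β => ∑ i, Real.exp (β * (r i - M)) with hT
  have hTpos : ∀ β, 0 < T β :=
    fun β => Finset.sum_pos (fun i _ => Real.exp_pos _) Finset.univ_nonempty
  have hEq : ∀ β : ℝ, 0 < β →
      (1/β) * KL q (softmax (fun i => β * r i)) = C/β - A + M + Real.log (T β) / β := by
    intro β hβ
    have hSpos : 0 < ∑ j, Real.exp (β * r j) :=
      Finset.sum_pos (fun i _ => Real.exp_pos _) Finset.univ_nonempty
    have hS : ∑ j, Real.exp (β * r j) = Real.exp (β * M) * T β := by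
      rw [hT, Finset.mul_sum]
      refine Finset.sum_congr rfl fun i _ => ?_
      rw [← Real.exp_add]; ring_nf
    have hlogS : Real.log (∑ j, Real.exp (β * r j)) = β * M + Real.log (T β) := by
      rw [hS, Real.log_mul (Real.exp_ne_zero _) (ne_of_gt (hTpos β)), Real.log_exp]
    have hKL : KL q (softmax (fun i => β * r i))
        = C - β * A + (β * M + Real.log (T β)) := by
      have hterm : ∀ i, q i * Real.log (q i / softmax (fun i => β * r i) i)
          = q i * Real.log (q i) - q i * (β * r i) + q i * (β * M + Real.log (T β)) := by
        intro i
        by_cases h : q i = 0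
        · simp [h]
        · have hp : softmax (fun i => β * r i) i = Real.exp (β * r i) / ∑ j, Real.exp (β * r j) := rfl
          rw [hp, Real.log_div h (by positivity),
            Real.log_div (Real.exp_ne_zero _) (ne_of_gt hSpos), Real.log_exp, hlogS]
          ring
      rw [KL, Finset.sum_congr rfl fun i _ => hterm i]
      rw [Finset.sum_add_distrib, Finset.sum_sub_distrib, ← Finset.sum_mul, hq1, one_mul]
      have : ∑ i, q i * (β * r i) = β * A := by
        rw [hA, Finset.mul_sum]; exact Finset.sum_congr rfl fun i _ => by ring
      rw [this]
    rw [hKL]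
    field_simp
    ring
  have hfinal : (∑ i, q i * (M - r i)) = M - A := by
    have : ∀ i, q i * (M - r i) = q i * M - q i * r i := fun i => by ring
    rw [Finset.sum_congr rfl fun i _ => this i, Finset.sum_sub_distrib, ← Finset.sum_mul, hq1, ← hA]
    ring
  have hlim : Filter.Tendsto (fun β : ℝ => C/β - A + M + Real.log (T β) / β)
      Filter.atTop (nhds (∑ i, q i * (M - r i))) := by
    rw [hfinal]
    have h1 : Filter.Tendsto (fun β : ℝ => C/β) Filter.atTop (nhds 0) :=
      Filter.Tendsto.div_atTop tendsto_const_nhds Filter.tendsto_id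
    have h2 : Filter.Tendsto (fun β : ℝ => Real.log (T β) / β) Filter.atTop (nhds 0) := by
      have hge : ∀ᶠ β : ℝ in Filter.atTop, 0 ≤ Real.log (T β) / β := by
        filter_upwards [Filter.eventually_gt_atTop 0] with β hβ
        apply div_nonneg _ (le_of_lt hβ)
        apply Real.log_nonneg
        calc (1:ℝ) = Real.exp (β * (r i₀ - M)) := by rw [hi₀]; simp
          _ ≤ T β := Finset.single_le_sum (f := fun i => Real.exp (β * (r i - M))) (fun i _ => (Real.exp_pos _).le) (Finset.mem_univ i₀)
      have hle' : ∀ᶠ β : ℝ in Filter.atTop, Real.log (T β) / β ≤ Real.log k / β := by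
        filter_upwards [Filter.eventually_gt_atTop 0] with β hβ
        gcongr
        · calc T β ≤ ∑ _i : Fin k, (1:ℝ) := by
                refine Finset.sum_le_sum fun i _ => ?_
                rw [← Real.exp_zero]
                apply Real.exp_le_exp.mpr
                have := hle i
                nlinarith
            _ = k := by simp
      have hk' : Filter.Tendsto (fun β : ℝ => Real.log k / β) Filter.atTop (nhds 0) :=
        Filter.Tendsto.div_atTop tendsto_const_nhds Filter.tendsto_id
      exact tendsto_of_tendsto_of_tendsto_of_le_of_le' tendsto_const_nhds hk' hge hle'
    have := ((h1.sub_const A).add_const M).add h2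
    have h0 : (0:ℝ) - A + M + 0 = M - A := by ring
    rw [h0] at this
    exact this
  refine hlim.congr' ?_
  filter_upwards [Filter.eventually_gt_atTop 0] with β hβ
  exact (hEq β hβ).symm
end
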